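/- Let K be a field of characteristic p > 3 and f = x^3 + y^3 + z^3 + a x y z ∈ K[[x,y,z]] with a^3 + 27 ≠ 0. Then μ(f) = 8. -/

import Mathlib

/-!
Write `J` for the Jacobian ideal of `f = x³ + y³ + z³ + a·xyz`, generated by
`f_x = 3x² + a·yz`, `f_y = 3y² + a·zx` and `f_z = 3z² + a·xy`. The identity
`(a³ + 27)·x²y = 9y·f_x - 3a·z·f_y + a²x·f_z` and its permutations put every `u²v` with `u ≠ v`
in `J`. Modulo `J` the maximal ideal `m = (x, y, z)` then satisfies `m² ⊆ (yz, zx, xy)`,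
`m³ ⊆ (xyz)` and `m⁴ = 0`; as every power series is a constant plus an element of `m`, the eight
squarefree monomials `x^S` span `K[[x, y, z]]/J`. They are independent because the linear form
`ψ = 3·coeff_{xyz} - a·(coeff_{x³} + coeff_{y³} + coeff_{z³})` vanishes on `J`, while
`ψ(x^{Tᶜ}·x^S)` is `3` for `S = T` and `0` otherwise.
-/

open MvPowerSeries

noncomputable def pd {n : ℕ} {K : Type} [Field K] (i : Fin n)
    (f : MvPowerSeries (Fin n) K) : MvPowerSeries (Fin n) K :=
  fun m => ((m i + 1 : ℕ) : K) * MvPowerSeries.coeff (R := K) (m + Finsupp.single i 1) f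

/-- The Milnor number: dimension of the quotient by the Jacobian ideal. -/
noncomputable def milnor {n : ℕ} (K : Type) [Field K] (f : MvPowerSeries (Fin n) K) : ℕ :=
  Module.finrank K (MvPowerSeries (Fin n) K ⧸ Ideal.span (Set.range fun i => pd i f))

namespace MvPowerSeries

variable {σ R : Type*} [CommSemiring R]

theorem mem_span_X_image_of_coeff_eq_zero (s : Finset σ) (f : MvPowerSeries σ R)
    (hf : ∀ d : σ →₀ ℕ, (∀ i ∈ s, d i = 0) → coeff d f = 0) :
    f ∈ Ideal.span (X '' (s : Set σ)) := by
  classical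
  induction s using Finset.induction_on generalizing f with
  | empty =>
    obtain rfl : f = 0 := by ext d; simpa using hf d
    exact zero_mem _
  | insert i s _ ih =>
    let g : MvPowerSeries σ R := fun d => if d i = 0 then coeff d f else 0
    let q : MvPowerSeries σ R := fun d => if d i = 0 then 0 else coeff d f
    have hfgq : f = g + q := by
      ext d
      change coeff d f = (if d i = 0 then coeff d f else 0) + (if d i = 0 then 0 else coeff d f)
      split_ifs <;> simp
    obtain ⟨r, hr⟩ : X i ∣ q := X_dvd_iff.mpr fun d hd => if_pos hd
    have hg : g ∈ Ideal.span (X '' (s : Set σ)) := ih g fun d hd => by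
      change (if d i = 0 then coeff d f else 0) = 0
      split_ifs with hdi
      · exact hf d (Finset.forall_mem_insert .. |>.mpr ⟨hdi, hd⟩)
      · rfl
    rw [hfgq, hr, Finset.coe_insert, Set.image_insert_eq]
    exact add_mem (Ideal.span_mono (Set.subset_insert _ _) hg)
      (Ideal.mul_mem_right _ _ (Ideal.subset_span (Set.mem_insert _ _)))

theorem mem_span_range_X_of_constantCoeff_eq_zero [Fintype σ] {f : MvPowerSeries σ R}
    (hf : constantCoeff f = 0) : f ∈ Ideal.span (Set.range X) := by
  rw [← Set.image_univ, ← Finset.coe_univ]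
  refine mem_span_X_image_of_coeff_eq_zero _ f fun d hd => ?_
  obtain rfl : d = 0 := by ext i; exact hd i (Finset.mem_univ i)
  rwa [coeff_zero_eq_constantCoeff_apply]

theorem prod_X_eq_monomial (S : Finset σ) :
    ∏ i ∈ S, (X i : MvPowerSeries σ R) = monomial (∑ i ∈ S, Finsupp.single i 1) 1 := by
  simp_rw [X_def, prod_monomial, Finset.prod_const_one]

end MvPowerSeries

theorem Ideal.restrictScalars_span_le_span_sup_mul {K R : Type*} [CommSemiring K] [CommRing R]
    [Algebra K R] (m : Ideal R) (hm : ∀ r : R, ∃ c : K, r - algebraMap K R c ∈ m) (s : Set R) :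
    (Ideal.span s).restrictScalars K ≤
      Submodule.span K s ⊔ (Ideal.span s * m).restrictScalars K := by
  intro x hx
  induction hx using Submodule.span_induction with
  | mem x hx => exact Submodule.mem_sup_left (Submodule.subset_span hx)
  | zero => exact zero_mem _
  | add x y _ _ hx hy => exact add_mem hx hy
  | smul r x hx ih =>
    obtain ⟨c, hc⟩ := hm r
    have hrx : r • x = c • x + x * (r - algebraMap K R c) := by
      rw [smul_eq_mul, Algebra.smul_def]; ring
    rw [hrx]
    exact add_mem (Submodule.smul_mem _ c ih) (Submodule.mem_sup_right (Ideal.mul_mem_mul hx hc))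

namespace HesseJacobian

variable {R : Type*} [CommRing R] {I : Ideal R} {a u v w : R}

theorem sq_mul_mem (hD : IsUnit (a ^ 3 + 27)) (hu : 3 * u ^ 2 + a * (v * w) ∈ I)
    (hv : 3 * v ^ 2 + a * (w * u) ∈ I) (hw : 3 * w ^ 2 + a * (u * v) ∈ I) :
    u ^ 2 * v ∈ I ∧ u ^ 2 * w ∈ I := by
  constructor <;> refine (I.unit_mul_mem_iff_mem hD).mp ?_
  · have : (a ^ 3 + 27) * (u ^ 2 * v) =
        9 * v * (3 * u ^ 2 + a * (v * w)) - 3 * a * w * (3 * v ^ 2 + a * (w * u))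
          + a ^ 2 * u * (3 * w ^ 2 + a * (u * v)) := by ring
    rw [this]
    exact add_mem (sub_mem (I.mul_mem_left _ hu) (I.mul_mem_left _ hv)) (I.mul_mem_left _ hw)
  · have : (a ^ 3 + 27) * (u ^ 2 * w) =
        9 * w * (3 * u ^ 2 + a * (v * w)) - 3 * a * v * (3 * w ^ 2 + a * (u * v))
          + a ^ 2 * u * (3 * v ^ 2 + a * (w * u)) := by ring
    rw [this]
    exact add_mem (sub_mem (I.mul_mem_left _ hu) (I.mul_mem_left _ hw)) (I.mul_mem_left _ hv)

theorem span_sq_le (h3 : IsUnit (3 : R)) (hu : 3 * u ^ 2 + a * (v * w) ∈ I)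
    (hv : 3 * v ^ 2 + a * (w * u) ∈ I) (hw : 3 * w ^ 2 + a * (u * v) ∈ I) :
    Ideal.span {u, v, w} ^ 2 ≤ I ⊔ Ideal.span {v * w, w * u, u * v} := by
  have hL : ∀ x ∈ ({v * w, w * u, u * v} : Set R), x ∈ I ⊔ Ideal.span {v * w, w * u, u * v} :=
    fun x hx => Ideal.mem_sup_right (Ideal.subset_span hx)
  have hsq : ∀ {x y z : R}, 3 * x ^ 2 + a * (y * z) ∈ I →
      y * z ∈ ({v * w, w * u, u * v} : Set R) → x * x ∈ I ⊔ Ideal.span {v * w, w * u, u * v} := by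
    intro x y z hx hyz
    refine ((I ⊔ _).unit_mul_mem_iff_mem h3).mp ?_
    rw [show 3 * (x * x) = 3 * x ^ 2 + a * (y * z) - a * (y * z) by ring]
    exact sub_mem (Ideal.mem_sup_left hx) (Ideal.mul_mem_left _ _ (hL _ hyz))
  rw [sq, Ideal.span_mul_span', Ideal.span_le]
  rintro _ ⟨x, hx, y, hy, rfl⟩
  simp only [Set.mem_insert_iff, Set.mem_singleton_iff] at hx hy
  rcases hx with rfl | rfl | rfl <;> rcases hy with rfl | rfl | rfl
  exacts [hsq hu (by simp), hL _ (by simp), hL _ (by simp [mul_comm]), hL _ (by simp [mul_comm]),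
    hsq hv (by simp), hL _ (by simp), hL _ (by simp), hL _ (by simp [mul_comm]), hsq hw (by simp)]

theorem span_pow_three_le (h3 : IsUnit (3 : R)) (hD : IsUnit (a ^ 3 + 27))
    (hu : 3 * u ^ 2 + a * (v * w) ∈ I) (hv : 3 * v ^ 2 + a * (w * u) ∈ I)
    (hw : 3 * w ^ 2 + a * (u * v) ∈ I) :
    Ideal.span {u, v, w} ^ 3 ≤ I ⊔ Ideal.span {u * v * w} := by
  obtain ⟨huv, huw⟩ := sq_mul_mem hD hu hv hw
  obtain ⟨hvw, hvu⟩ := sq_mul_mem hD hv hw hu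
  obtain ⟨hwu, hwv⟩ := sq_mul_mem hD hw hu hv
  have hI : ∀ {x y : R}, x ∈ I → y = x → y ∈ I ⊔ Ideal.span {u * v * w} :=
    fun hx hyx => hyx ▸ Ideal.mem_sup_left hx
  have hC : ∀ {y : R}, y = u * v * w → y ∈ I ⊔ Ideal.span {u * v * w} :=
    fun hy => Ideal.mem_sup_right (Ideal.subset_span hy)
  have hmL : Ideal.span {u, v, w} * Ideal.span {v * w, w * u, u * v} ≤
      I ⊔ Ideal.span {u * v * w} := by
    rw [Ideal.span_mul_span', Ideal.span_le]
    rintro _ ⟨x, hx, y, hy, rfl⟩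
    simp only [Set.mem_insert_iff, Set.mem_singleton_iff] at hx hy
    rcases hx with rfl | rfl | rfl <;> rcases hy with rfl | rfl | rfl
    exacts [hC (by ring), hI huw (by ring), hI huv (by ring), hI hvw (by ring), hC (by ring),
      hI hvu (by ring), hI hwv (by ring), hI hwu (by ring), hC (by ring)]
  calc Ideal.span {u, v, w} ^ 3
      = Ideal.span {u, v, w} * Ideal.span {u, v, w} ^ 2 := pow_succ' _ _
    _ ≤ Ideal.span {u, v, w} * (I ⊔ Ideal.span {v * w, w * u, u * v}) :=
      Ideal.mul_mono_right (span_sq_le h3 hu hv hw)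
    _ ≤ I ⊔ Ideal.span {u * v * w} := by
      rw [Ideal.mul_sup]
      exact sup_le (le_sup_of_le_left Ideal.mul_le_right) hmL

theorem span_mul_span_le (hD : IsUnit (a ^ 3 + 27)) (hu : 3 * u ^ 2 + a * (v * w) ∈ I)
    (hv : 3 * v ^ 2 + a * (w * u) ∈ I) (hw : 3 * w ^ 2 + a * (u * v) ∈ I) :
    Ideal.span {u * v * w} * Ideal.span {u, v, w} ≤ I := by
  have huv := (sq_mul_mem hD hu hv hw).1
  have hvw := (sq_mul_mem hD hv hw hu).1
  have hwu := (sq_mul_mem hD hw hu hv).1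
  rw [Ideal.span_mul_span', Ideal.span_le]
  rintro _ ⟨x, rfl, y, hy, rfl⟩
  simp only [Set.mem_insert_iff, Set.mem_singleton_iff] at hy
  dsimp only
  rcases hy with rfl | rfl | rfl
  · rw [show y * v * w * y = y ^ 2 * v * w by ring]; exact I.mul_mem_right w huv
  · rw [show u * y * w * y = y ^ 2 * w * u by ring]; exact I.mul_mem_right u hvw
  · rw [show u * v * y * y = y ^ 2 * u * v by ring]; exact I.mul_mem_right v hwu

theorem top_le_span_sup {K : Type*} [CommSemiring K] [Algebra K R]
    (hm : ∀ r : R, ∃ c : K, r - algebraMap K R c ∈ Ideal.span {u, v, w})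
    (h3 : IsUnit (3 : R)) (hD : IsUnit (a ^ 3 + 27)) (hu : 3 * u ^ 2 + a * (v * w) ∈ I)
    (hv : 3 * v ^ 2 + a * (w * u) ∈ I) (hw : 3 * w ^ 2 + a * (u * v) ∈ I) :
    ⊤ ≤ Submodule.span K {1, u, v, w, v * w, w * u, u * v, u * v * w} ⊔ I.restrictScalars K := by
  set m := Ideal.span {u, v, w}
  set T := Submodule.span K {1, u, v, w, v * w, w * u, u * v, u * v * w} ⊔ I.restrictScalars K
  have hspan : ∀ s ⊆ ({1, u, v, w, v * w, w * u, u * v, u * v * w} : Set R),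
      Submodule.span K s ≤ T := fun s hs => le_sup_of_le_left (Submodule.span_mono hs)
  have hI : I.restrictScalars K ≤ T := le_sup_right
  have hle : ∀ {L L' : Ideal R}, L ≤ I ⊔ L' → L'.restrictScalars K ≤ T →
      L.restrictScalars K ≤ T := fun h h' =>
    (Submodule.restrictScalars_mono K h).trans
      (by rw [Submodule.restrictScalars_sup]; exact sup_le hI h')
  have hlift := Ideal.restrictScalars_span_le_span_sup_mul m hm
  have hm3 : (m ^ 3).restrictScalars K ≤ T := by
    refine hle (span_pow_three_le h3 hD hu hv hw) ((hlift _).trans (sup_le ?_ ?_))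
    · exact hspan _ (by simp)
    · exact (Submodule.restrictScalars_mono K (span_mul_span_le hD hu hv hw)).trans hI
  have hL2 : Ideal.span {v * w, w * u, u * v} ≤ m ^ 2 := by
    rw [Ideal.span_le, sq]
    have hmul : ∀ {x y : R}, x ∈ ({u, v, w} : Set R) → y ∈ ({u, v, w} : Set R) → x * y ∈ m * m :=
      fun hx hy => Ideal.mul_mem_mul (Ideal.subset_span hx) (Ideal.subset_span hy)
    simp only [Set.insert_subset_iff, Set.singleton_subset_iff, SetLike.mem_coe]
    exact ⟨hmul (by simp) (by simp), hmul (by simp) (by simp), hmul (by simp) (by simp)⟩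
  have hm2 : (m ^ 2).restrictScalars K ≤ T := by
    refine hle (span_sq_le h3 hu hv hw) ((hlift _).trans (sup_le ?_ ?_))
    · exact hspan _ (by simp [Set.insert_subset_iff])
    · refine (Submodule.restrictScalars_mono K ?_).trans hm3
      rw [pow_succ]
      exact Ideal.mul_mono_left hL2
  have hm1 : m.restrictScalars K ≤ T := by
    refine (hlift _).trans (sup_le (hspan _ (by simp [Set.insert_subset_iff])) ?_)
    rw [← sq]
    exact hm2
  intro r _
  obtain ⟨c, hc⟩ := hm r
  rw [← add_sub_cancel (algebraMap K R c) r, Algebra.algebraMap_eq_smul_one]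
  exact add_mem (hspan {1} (by simp) (Submodule.smul_mem _ c (Submodule.mem_span_singleton_self 1)))
    (hm1 (by rwa [← Algebra.algebraMap_eq_smul_one]))

end HesseJacobian

noncomputable def jacobianIdeal {n : ℕ} {K : Type} [Field K] (f : MvPowerSeries (Fin n) K) :
    Ideal (MvPowerSeries (Fin n) K) :=
  Ideal.span (Set.range fun i => pd i f)

theorem pd_eq_pderiv {n : ℕ} {K : Type} [Field K] (i : Fin n) (f : MvPowerSeries (Fin n) K) :
    pd i f = pderiv K i f := by
  ext m
  rw [coeff_pderiv, mul_comm]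
  exact congrArg (· * coeff (m + Finsupp.single i 1) f) (Nat.cast_succ (m i))

/-- A normal form for exponents in three variables, on which `simp` can decide `≤` and `-`. -/
noncomputable def expVec (i j k : ℕ) : Fin 3 →₀ ℕ := Finsupp.equivFunOnFinite.symm ![i, j, k]

section expVec

variable {i j k i' j' k' : ℕ}

theorem expVec_add : expVec i j k + expVec i' j' k' = expVec (i + i') (j + j') (k + k') := by
  ext l; fin_cases l <;> rfl

theorem expVec_tsub : expVec i j k - expVec i' j' k' = expVec (i - i') (j - j') (k - k') := by
  ext l; fin_cases l <;> rfl

theorem expVec_le_expVec : expVec i j k ≤ expVec i' j' k' ↔ i ≤ i' ∧ j ≤ j' ∧ k ≤ k' := by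
  simp [Finsupp.le_def, Fin.forall_fin_succ, expVec]

theorem single_eq_expVec (n : ℕ) :
    Finsupp.single 0 n = expVec n 0 0 ∧ Finsupp.single 1 n = expVec 0 n 0 ∧
      Finsupp.single 2 n = expVec 0 0 n := by
  refine ⟨?_, ?_, ?_⟩ <;> ext l <;> fin_cases l <;> simp [expVec]

end expVec

section hesseCubic

variable {K : Type} [Field K]

noncomputable def hesseCubic (a : K) : MvPowerSeries (Fin 3) K :=
  X 0 ^ 3 + X 1 ^ 3 + X 2 ^ 3 + C a * X 0 * X 1 * X 2

theorem pd_hesseCubic (a : K) (i : Fin 3) :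
    pd i (hesseCubic a) = 3 * X i ^ 2 + C a * (X (i + 1) * X (i + 2)) := by
  rw [pd_eq_pderiv, hesseCubic]
  fin_cases i <;>
    simp only [map_add, Derivation.leibniz, Derivation.leibniz_pow, pderiv_C, pderiv_X,
      Pi.single_apply, Fin.isValue, Fin.zero_eta, Fin.mk_one, Fin.reduceFinMk, Fin.reduceAdd,
      Fin.reduceEq, ↓reduceIte, smul_eq_mul, nsmul_eq_mul] <;>
    ring

theorem pd_hesseCubic_eq_monomial (a : K) (i : Fin 3) :
    pd i (hesseCubic a) = monomial (Finsupp.single i 2) 3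
      + monomial (Finsupp.single (i + 1) 1 + Finsupp.single (i + 2) 1) a := by
  rw [pd_hesseCubic, X_pow_eq, X_def, X_def, monomial_mul_monomial, ← map_ofNat (C (σ := Fin 3)),
    ← monomial_zero_eq_C_apply, ← monomial_zero_eq_C_apply, monomial_mul_monomial,
    monomial_mul_monomial, zero_add, zero_add, mul_one, mul_one, mul_one]

theorem top_le_span_prod_X_sup_jacobianIdeal {a : K} (h3 : (3 : K) ≠ 0) (hD : a ^ 3 + 27 ≠ 0) :
    ⊤ ≤ Submodule.span K (Set.range fun S : Finset (Fin 3) => ∏ i ∈ S, X i)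
      ⊔ (jacobianIdeal (hesseCubic a)).restrictScalars K := by
  have hm (r : MvPowerSeries (Fin 3) K) :
      ∃ c : K, r - algebraMap K _ c ∈ Ideal.span {X 0, X 1, X 2} := by
    refine ⟨constantCoeff r, ?_⟩
    have hX : Set.range (X : Fin 3 → MvPowerSeries (Fin 3) K) = {X 0, X 1, X 2} := by
      ext; simp [Fin.exists_fin_succ, eq_comm]
    rw [← hX]
    exact mem_span_range_X_of_constantCoeff_eq_zero (by simp [MvPowerSeries.algebraMap_apply])
  have hpd (i : Fin 3) :
      3 * X i ^ 2 + C a * (X (i + 1) * X (i + 2)) ∈ jacobianIdeal (hesseCubic a) :=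
    pd_hesseCubic a i ▸ Ideal.subset_span ⟨i, rfl⟩
  have h3' : IsUnit (3 : MvPowerSeries (Fin 3) K) := by
    simpa only [map_ofNat] using (Ne.isUnit h3).map (C (σ := Fin 3))
  have hD' : IsUnit (C a ^ 3 + 27 : MvPowerSeries (Fin 3) K) := by
    simpa only [map_add, map_pow, map_ofNat] using (Ne.isUnit hD).map (C (σ := Fin 3))
  refine (HesseJacobian.top_le_span_sup hm h3' hD' (by simpa using hpd 0) (by simpa using hpd 1)
    (by simpa using hpd 2)).trans (sup_le_sup_right (Submodule.span_mono ?_) _)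
  simp only [Set.insert_subset_iff, Set.singleton_subset_iff, Set.mem_range]
  exact ⟨⟨∅, by simp⟩, ⟨{0}, by simp⟩, ⟨{1}, by simp⟩, ⟨{2}, by simp⟩, ⟨{1, 2}, by simp⟩,
    ⟨{0, 2}, by simp [mul_comm]⟩, ⟨{0, 1}, by simp⟩, ⟨{0, 1, 2}, by simp [mul_assoc]⟩⟩

/-- Since `3x³ ≡ -a·xyz` modulo the Jacobian ideal, this form is dual to the socle generator
`xyz`. -/
noncomputable def socleFunctional (a : K) : MvPowerSeries (Fin 3) K →ₗ[K] K :=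
  3 • coeff (∑ i, Finsupp.single i 1) - a • ∑ i, coeff (Finsupp.single i 3)

theorem socleFunctional_mul_pd {a : K} (h : MvPowerSeries (Fin 3) K)
    (i : Fin 3) : socleFunctional a (h * pd i (hesseCubic a)) = 0 := by
  rw [pd_hesseCubic_eq_monomial]
  fin_cases i <;>
    simp [socleFunctional, mul_add, coeff_mul_monomial, Fin.sum_univ_three, single_eq_expVec,
      expVec_add, expVec_le_expVec, expVec_tsub, mul_comm, mul_left_comm]

theorem socleFunctional_eq_zero_of_mem_jacobianIdeal {a : K}
    {g : MvPowerSeries (Fin 3) K} (hg : g ∈ jacobianIdeal (hesseCubic a)) :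
    socleFunctional a g = 0 := by
  obtain ⟨c, rfl⟩ := Ideal.mem_span_range_iff_exists_fun.mp hg
  simp [socleFunctional_mul_pd]

theorem socleFunctional_prod_X_mul_prod_X {a : K} (S T : Finset (Fin 3)) :
    socleFunctional a ((∏ i ∈ Tᶜ, X i) * ∏ i ∈ S, X i) = if S = T then 3 else 0 := by
  classical
  rw [prod_X_eq_monomial, prod_X_eq_monomial, monomial_mul_monomial, one_mul]
  have he : ∀ i, (∑ i ∈ Tᶜ, Finsupp.single i 1 + ∑ i ∈ S, Finsupp.single i 1 : Fin 3 →₀ ℕ) i =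
      (if i ∈ T then 0 else 1) + (if i ∈ S then 1 else 0) := by
    simp [Finsupp.single_apply]
  generalize (∑ i ∈ Tᶜ, Finsupp.single i 1 + ∑ i ∈ S, Finsupp.single i 1 : Fin 3 →₀ ℕ) = e at he ⊢
  have hcube : ∀ i, Finsupp.single i 3 ≠ e := by
    intro i h
    have := he i
    rw [← h, Finsupp.single_eq_same] at this
    split_ifs at this <;> omega
  have hone : ∀ i, (∑ i, Finsupp.single i 1 : Fin 3 →₀ ℕ) i = 1 := by
    simp [Finsupp.single_apply]
  have hsqfree : ∑ i, Finsupp.single i 1 = e ↔ S = T := by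
    constructor
    · rintro rfl
      ext i
      have := he i
      rw [hone] at this
      by_cases hS : i ∈ S <;> by_cases hT : i ∈ T <;> simp [hS, hT] at this ⊢
    · rintro rfl
      ext i
      rw [he, hone]
      split_ifs <;> rfl
  simp [socleFunctional, coeff_monomial, hcube, hsqfree]

theorem eq_zero_of_sum_smul_prod_X_mem_jacobianIdeal {a : K} (h3 : (3 : K) ≠ 0)
    (c : Finset (Fin 3) → K) (hc : ∑ S, c S • ∏ i ∈ S, X i ∈ jacobianIdeal (hesseCubic a))
    (T : Finset (Fin 3)) : c T = 0 := by
  have := socleFunctional_eq_zero_of_mem_jacobianIdeal (Ideal.mul_mem_left _ (∏ i ∈ Tᶜ, X i) hc)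
  simpa [Finset.mul_sum, socleFunctional_prod_X_mul_prod_X, h3] using this

theorem finrank_quotient_jacobianIdeal_hesseCubic {a : K} (h3 : (3 : K) ≠ 0)
    (hD : a ^ 3 + 27 ≠ 0) :
    Module.finrank K (MvPowerSeries (Fin 3) K ⧸ jacobianIdeal (hesseCubic a)) = 8 := by
  have hli : LinearIndependent K
      fun S : Finset (Fin 3) => ∏ i ∈ S, (X i : MvPowerSeries (Fin 3) K) :=
    Fintype.linearIndependent_iff.mpr fun c hc =>
      eq_zero_of_sum_smul_prod_X_mem_jacobianIdeal (a := a) h3 c (hc ▸ zero_mem _)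
  have hcompl : IsCompl (Submodule.span K (Set.range fun S : Finset (Fin 3) => ∏ i ∈ S, X i))
      ((jacobianIdeal (hesseCubic a)).restrictScalars K) := by
    refine ⟨Submodule.disjoint_def.mpr fun g hg hgJ => ?_,
      codisjoint_iff.mpr (top_le_iff.mp (top_le_span_prod_X_sup_jacobianIdeal h3 hD))⟩
    obtain ⟨c, rfl⟩ := (Submodule.mem_span_range_iff_exists_fun K).mp hg
    simp [eq_zero_of_sum_smul_prod_X_mem_jacobianIdeal h3 c hgJ]
  rw [← (Submodule.Quotient.restrictScalarsEquiv K _).finrank_eq,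
    (Submodule.quotientEquivOfIsCompl _ _ hcompl.symm).finrank_eq, finrank_span_eq_card hli,
    Fintype.card_finset]
  rfl

end hesseCubic

theorem stmt6 (K : Type) [Field K] (p : ℕ) [CharP K p] (hp : 3 < p) (a : K)
    (ha : a ^ 3 + 27 ≠ 0) :
    milnor K (X (0 : Fin 3) ^ 3 + X 1 ^ 3 + X 2 ^ 3 + C (σ := Fin 3) (R := K) a * X 0 * X 1 * X 2) = 8 := by
  have h3 : (3 : K) ≠ 0 := by
    rw [← Nat.cast_ofNat, Ne, CharP.cast_eq_zero_iff K p]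
    exact Nat.not_dvd_of_pos_of_lt (by norm_num) hp
  exact finrank_quotient_jacobianIdeal_hesseCubic h3 ha
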